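/- Let H be a hypernova with m ≥ 3 hyperedges, i.e., a hypergraph whose m hyperedges pairwise intersect in exactly the single common vertex x, each hyperedge having at least 2 vertices. Then for every finite k, H together with k isolated vertices is not the niche hypergraph of any acyclic digraph; that is, the niche number of H is infinite. -/

import Mathlib

/-- A digraph: a finite vertex set together with a finite set of arcs. -/
structure FinDigraph (α : Type*) where
  verts : Finset α
  arcs : Finset (α × α)

namespace FinDigraph

variable {α : Type*} [DecidableEq α]

/-- A digraph is legal if arcs join distinct vertices of the digraph and
at most one of `(u,v)`, `(v,u)` is an arc. -/
def IsLegal (D : FinDigraph α) : Prop :=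
  (∀ a ∈ D.arcs, a.1 ∈ D.verts ∧ a.2 ∈ D.verts ∧ a.1 ≠ a.2) ∧
    ∀ u v : α, (u, v) ∈ D.arcs → (v, u) ∉ D.arcs

/-- A digraph is acyclic if it has no directed cycle `x₀, x₁, ..., x_{n-1}, x₀`
with `n ≥ 3` and all `xᵢ` distinct. -/
def IsAcyclic (D : FinDigraph α) : Prop :=
  ¬ ∃ (n : ℕ) (x : ℕ → α), 3 ≤ n ∧
      (∀ i < n, ∀ j < n, i ≠ j → x i ≠ x j) ∧
      (∀ i, i + 1 < n → (x i, x (i + 1)) ∈ D.arcs) ∧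
      (x (n - 1), x 0) ∈ D.arcs

/-- The in-neighbour set of a vertex. -/
def inN (D : FinDigraph α) (v : α) : Finset α :=
  D.verts.filter fun u => (u, v) ∈ D.arcs

/-- The out-neighbour set of a vertex. -/
def outN (D : FinDigraph α) (v : α) : Finset α :=
  D.verts.filter fun u => (v, u) ∈ D.arcs

/-- The (edge set of the) niche hypergraph of a digraph: all sets of size at least 2
which are the in-neighbour set or the out-neighbour set of some vertex. -/
def NH (D : FinDigraph α) : Finset (Finset α) :=
  ((D.verts.image D.inN) ∪ (D.verts.image D.outN)).filter fun e => 2 ≤ e.card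

end FinDigraph

/-- A hypergraph: a finite vertex set and a finite family of hyperedges, each a
subset of the vertices of size at least 2. -/
structure FinHypergraph (α : Type*) where
  verts : Finset α
  edges : Finset (Finset α)
  edge_sub : ∀ e ∈ edges, e ⊆ verts
  edge_card : ∀ e ∈ edges, 2 ≤ e.card

namespace FinHypergraph

variable {α : Type*} [DecidableEq α]

/-- The degree of a vertex: the number of hyperedges containing it. -/
def degree (H : FinHypergraph α) (v : α) : ℕ :=
  (H.edges.filter fun e => v ∈ e).card

/-- A hypergraph is linear if distinct hyperedges share at most one vertex. -/
def IsLinear (H : FinHypergraph α) : Prop :=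
  ∀ e ∈ H.edges, ∀ f ∈ H.edges, e ≠ f → (e ∩ f).card ≤ 1

/-- A hypergraph is a hypertree if there is a tree on its vertex set in which
every hyperedge induces a connected subgraph. -/
def IsHypertree (H : FinHypergraph α) : Prop :=
  ∃ T : SimpleGraph {x // x ∈ H.verts}, T.IsTree ∧
    ∀ e ∈ H.edges, (T.induce {x : {x // x ∈ H.verts} | x.1 ∈ e}).Connected

/-- The number of hyperedges intersecting `e` (other than `e` itself), i.e. the
edge degree of `e`. -/
def nbrCount (H : FinHypergraph α) (e : Finset α) : ℕ :=
  (H.edges.filter fun f => f ≠ e ∧ (e ∩ f).Nonempty).card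

/-- A twig: a hyperedge intersecting exactly one other hyperedge. -/
def IsTwig (H : FinHypergraph α) (e : Finset α) : Prop :=
  e ∈ H.edges ∧ H.nbrCount e = 1

/-- A trunk: a hyperedge intersecting at least two other hyperedges. -/
def IsTrunk (H : FinHypergraph α) (e : Finset α) : Prop :=
  e ∈ H.edges ∧ 2 ≤ H.nbrCount e

instance (H : FinHypergraph α) : DecidablePred H.IsTwig := fun e => by
  unfold IsTwig; infer_instance

instance (H : FinHypergraph α) : DecidablePred H.IsTrunk := fun e => by
  unfold IsTrunk; infer_instance

/-- The branch of a trunk `e`: `e` together with all twigs intersecting `e`. -/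
def branch (H : FinHypergraph α) (e : Finset α) : Finset (Finset α) :=
  insert e (H.edges.filter fun f => H.IsTwig f ∧ (e ∩ f).Nonempty)

/-- A family of hyperedges is connected if any two vertices covered by the family are
joined by a chain of vertices in which consecutive vertices share a hyperedge. -/
def EdgesConnected (E : Finset (Finset α)) : Prop :=
  ∀ u v : α, (∃ f ∈ E, u ∈ f) → (∃ f ∈ E, v ∈ f) →
    Relation.ReflTransGen (fun a b => ∃ f ∈ E, a ∈ f ∧ b ∈ f) u v

end FinHypergraph

/-- `D` is a good digraph of `H` if `D` is acyclic, `NH(D) = H`, and every hyperedge of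
`H` contains at most one bud (degree-one vertex) whose in- and out-neighbour sets in `D`
are both nonempty. -/
def GoodDigraph {α : Type*} [DecidableEq α] (D : FinDigraph α) (H : FinHypergraph α) : Prop :=
  D.IsAcyclic ∧ D.verts = H.verts ∧ D.NH = H.edges ∧
    ∀ e ∈ H.edges,
      (e.filter fun v => H.degree v = 1 ∧ (D.inN v).Nonempty ∧ (D.outN v).Nonempty).card ≤ 1

/-!
Every hyperedge of the hypernova contains the centre `x`. If two distinct hyperedges were the
in-neighbourhoods of `v ≠ w`, then `v, w` would both be out-neighbours of `x`, so the out-neighbourhood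
of `x` would itself be a hyperedge, which must contain `x`: a loop. Dually for out-neighbourhoods.
Hence the niche hypergraph of a loopless digraph in which some vertex lies in every hyperedge has at
most two hyperedges, one of each kind.
-/

theorem Finset.mem_of_inter_eq_singleton {α : Type*} [DecidableEq α] {E : Finset (Finset α)}
    {x : α} (hE : 1 < E.card) (hinter : ∀ e ∈ E, ∀ f ∈ E, e ≠ f → e ∩ f = {x}) :
    ∀ e ∈ E, x ∈ e := by
  intro e he
  obtain ⟨f, hf, hfe⟩ := Finset.exists_mem_ne hE e
  exact (Finset.mem_inter.mp (hinter e he f hf hfe.symm ▸ Finset.mem_singleton_self x)).1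

namespace FinDigraph

variable {α : Type*} [DecidableEq α] {D : FinDigraph α}

@[simp]
theorem mem_inN {u v : α} : u ∈ D.inN v ↔ u ∈ D.verts ∧ (u, v) ∈ D.arcs :=
  Finset.mem_filter

@[simp]
theorem mem_outN {u v : α} : u ∈ D.outN v ↔ u ∈ D.verts ∧ (v, u) ∈ D.arcs :=
  Finset.mem_filter

theorem mem_NH {e : Finset α} :
    e ∈ D.NH ↔ (∃ v ∈ D.verts, D.inN v = e ∨ D.outN v = e) ∧ 2 ≤ e.card := by
  simp only [NH, Finset.mem_filter, Finset.mem_union, Finset.mem_image, ← exists_or,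
    ← and_or_left]

theorem inN_mem_NH {v : α} (hv : v ∈ D.verts) (h : 2 ≤ (D.inN v).card) : D.inN v ∈ D.NH :=
  mem_NH.mpr ⟨⟨v, hv, .inl rfl⟩, h⟩

theorem outN_mem_NH {v : α} (hv : v ∈ D.verts) (h : 2 ≤ (D.outN v).card) :
    D.outN v ∈ D.NH :=
  mem_NH.mpr ⟨⟨v, hv, .inr rfl⟩, h⟩

theorem IsLegal.notMem_inN_self (hD : D.IsLegal) (v : α) : v ∉ D.inN v :=
  fun h => (hD.1 _ (mem_inN.mp h).2).2.2 rfl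

theorem IsLegal.notMem_outN_self (hD : D.IsLegal) (v : α) : v ∉ D.outN v :=
  fun h => (hD.1 _ (mem_outN.mp h).2).2.2 rfl

theorem IsLegal.eq_of_mem_inN (hD : D.IsLegal) {x : α} (hx : ∀ e ∈ D.NH, x ∈ e) {v w : α}
    (hv : x ∈ D.inN v) (hw : x ∈ D.inN w) : v = w := by
  by_contra hvw
  have hxv := (mem_inN.mp hv).2
  have hxw := (mem_inN.mp hw).2
  have hcard : 2 ≤ (D.outN x).card := Finset.one_lt_card.mpr
    ⟨v, mem_outN.mpr ⟨(hD.1 _ hxv).2.1, hxv⟩, w, mem_outN.mpr ⟨(hD.1 _ hxw).2.1, hxw⟩, hvw⟩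
  exact hD.notMem_outN_self x (hx _ (outN_mem_NH (mem_inN.mp hv).1 hcard))

theorem IsLegal.eq_of_mem_outN (hD : D.IsLegal) {x : α} (hx : ∀ e ∈ D.NH, x ∈ e) {v w : α}
    (hv : x ∈ D.outN v) (hw : x ∈ D.outN w) : v = w := by
  by_contra hvw
  have hvx := (mem_outN.mp hv).2
  have hwx := (mem_outN.mp hw).2
  have hcard : 2 ≤ (D.inN x).card := Finset.one_lt_card.mpr
    ⟨v, mem_inN.mpr ⟨(hD.1 _ hvx).1, hvx⟩, w, mem_inN.mpr ⟨(hD.1 _ hwx).1, hwx⟩, hvw⟩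
  exact hD.notMem_inN_self x (hx _ (inN_mem_NH (mem_outN.mp hv).1 hcard))

theorem IsLegal.card_NH_le_two (hD : D.IsLegal) {x : α} (hx : ∀ e ∈ D.NH, x ∈ e) :
    D.NH.card ≤ 2 := by
  classical
  let IsIn (e : Finset α) : Prop := ∃ v, D.inN v = e
  have hin : (D.NH.filter IsIn).card ≤ 1 := by
    refine Finset.card_le_one.mpr ?_
    rintro _ he _ hf
    obtain ⟨he, v, rfl⟩ := Finset.mem_filter.mp he
    obtain ⟨hf, w, rfl⟩ := Finset.mem_filter.mp hf
    rw [hD.eq_of_mem_inN hx (hx _ he) (hx _ hf)]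
  have hout : (D.NH.filter (¬ IsIn ·)).card ≤ 1 := by
    refine Finset.card_le_one.mpr ?_
    intro e he f hf
    obtain ⟨he, he'⟩ := Finset.mem_filter.mp he
    obtain ⟨hf, hf'⟩ := Finset.mem_filter.mp hf
    obtain ⟨⟨v, -, hv | rfl⟩, -⟩ := mem_NH.mp he
    · exact absurd ⟨v, hv⟩ he'
    obtain ⟨⟨w, -, hw | rfl⟩, -⟩ := mem_NH.mp hf
    · exact absurd ⟨w, hw⟩ hf'
    rw [hD.eq_of_mem_outN hx (hx _ he) (hx _ hf)]
  have := Finset.card_filter_add_card_filter_not (s := D.NH) IsIn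
  omega

end FinDigraph

/-- A hypernova with at least three hyperedges, pairwise intersecting in exactly the
common vertex `x`, has infinite niche number: no addition of isolated vertices makes it
the niche hypergraph of an acyclic digraph. -/
theorem hypernova_niche_infinite {α : Type*} [DecidableEq α]
    (H : FinHypergraph α) (x : α) (hm : 3 ≤ H.edges.card)
    (hstar : ∀ e ∈ H.edges, ∀ f ∈ H.edges, e ≠ f → e ∩ f = {x}) :
    ¬ ∃ D : FinDigraph α, D.IsLegal ∧ D.IsAcyclic ∧ H.verts ⊆ D.verts ∧
        D.NH = H.edges := by
  rintro ⟨D, hD, -, -, hNH⟩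
  have hx : ∀ e ∈ D.NH, x ∈ e := by
    rw [hNH]
    exact Finset.mem_of_inter_eq_singleton (by omega) hstar
  have := hD.card_NH_le_two hx
  rw [hNH] at this
  omega
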